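/- Fix a real number α > 0 and define B_n : (0,∞) → ℝ recursively by B_0(r) = -erf(√α · r)/r and B_{n+1}(r) = (1/r²)·((2n+1)·B_n(r) + (2α)^{n+1}/√(απ) · exp(-α r²)). Then for every nonnegative integer n, the limit of B_n(r) as r → 0⁺ exists and equals -(α^{n+1/2}/√π) · 2^{n+1}/(2n+1). -/

import Mathlib

open scoped Nat

/-- The error function `erf(x) = (2/√π) ∫₀ˣ exp(-t²) dt`. -/
noncomputable def erf (x : ℝ) : ℝ :=
  (2 / Real.sqrt Real.pi) * ∫ t in (0:ℝ)..x, Real.exp (-t ^ 2)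

/-- The recursively defined functions `B_n` from the paper (depending on `α`). -/
noncomputable def B (α : ℝ) : ℕ → ℝ → ℝ
  | 0, r => -erf (Real.sqrt α * r) / r
  | n + 1, r => (1 / r ^ 2) * ((2 * n + 1) * B α n r
      + (2 * α) ^ (n + 1) / Real.sqrt (α * Real.pi) * Real.exp (-α * r ^ 2))

/-!
For the moments `M_n = gaussMoment n`, integration by parts gives
`M_{n+1}(x) = (2n+1)/2 · M_n(x) - x^(2n+1) e^(-x²)/2`, which is exactly the recursion defining `B`,
so `B_n(r) = -(2^(n+1)/√π) · M_n(√α r) / r^(2n+1)`. Squeezing the integrand between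
`t^(2n) (1 - t²)` and `t^(2n)` shows `M_n(x) / x^(2n+1) → 1/(2n+1)` as `x → 0⁺`.
-/

open Real Filter Topology intervalIntegral

noncomputable def gaussMoment (n : ℕ) (x : ℝ) : ℝ :=
  ∫ t in (0:ℝ)..x, t ^ (2 * n) * exp (-t ^ 2)

lemma hasDerivAt_exp_neg_sq (t : ℝ) :
    HasDerivAt (fun t : ℝ => exp (-t ^ 2)) (-2 * t * exp (-t ^ 2)) t := by
  simpa [mul_comm] using ((hasDerivAt_pow 2 t).neg).exp

lemma gaussMoment_succ (n : ℕ) (x : ℝ) :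
    gaussMoment (n + 1) x
      = (2 * n + 1) / 2 * gaussMoment n x - x ^ (2 * n + 1) / 2 * exp (-x ^ 2) := by
  have hderiv (t : ℝ) : HasDerivAt (fun t : ℝ => -(t ^ (2 * n + 1) / 2) * exp (-t ^ 2))
      (t ^ (2 * (n + 1)) * exp (-t ^ 2) - (2 * n + 1) / 2 * (t ^ (2 * n) * exp (-t ^ 2))) t := by
    have hpow : HasDerivAt (fun t : ℝ => t ^ (2 * n + 1)) ((2 * n + 1 : ℝ) * t ^ (2 * n)) t := by
      simpa using hasDerivAt_pow (2 * n + 1) t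
    exact ((hpow.div_const 2).fun_neg.fun_mul (hasDerivAt_exp_neg_sq t)).congr_deriv (by ring)
  have hint (m : ℕ) :
      IntervalIntegrable (fun t : ℝ => t ^ m * exp (-t ^ 2)) MeasureTheory.volume 0 x :=
    Continuous.intervalIntegrable (by fun_prop) _ _
  have hftc := integral_eq_sub_of_hasDerivAt (fun t _ => hderiv t)
    ((hint _).sub ((hint _).const_mul _))
  rw [integral_sub (hint _) ((hint _).const_mul _), integral_const_mul] at hftc
  have hzero : -((0 : ℝ) ^ (2 * n + 1) / 2) * exp (-0 ^ 2) = 0 := by simp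
  rw [hzero, sub_zero] at hftc
  rw [gaussMoment, gaussMoment]
  linarith

lemma B_eq_gaussMoment {α : ℝ} (hα : 0 ≤ α) (n : ℕ) {r : ℝ} (hr : r ≠ 0) :
    B α n r = -(2 ^ (n + 1) / √π) * gaussMoment n (√α * r) / r ^ (2 * n + 1) := by
  induction n with
  | zero => simp [B, erf, gaussMoment]
  | succ n ih =>
    obtain ⟨s, hs, rfl⟩ : ∃ s, 0 ≤ s ∧ α = s ^ 2 := ⟨√α, sqrt_nonneg α, (sq_sqrt hα).symm⟩
    rw [B, ih, gaussMoment_succ, sqrt_mul (sq_nonneg s), sqrt_sq hs]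
    have : √π ≠ 0 := (sqrt_pos.2 pi_pos).ne'
    rcases hs.eq_or_lt with rfl | hs
    · simp [gaussMoment]
    field_simp
    ring

lemma gaussMoment_le (n : ℕ) {x : ℝ} (hx : 0 ≤ x) :
    gaussMoment n x ≤ x ^ (2 * n + 1) / (2 * n + 1) := by
  have hpow : ∫ t in (0:ℝ)..x, t ^ (2 * n) = x ^ (2 * n + 1) / (2 * n + 1) := by
    simp [integral_pow]
  rw [← hpow]
  refine integral_mono_on hx (Continuous.intervalIntegrable (by fun_prop) _ _)
    (Continuous.intervalIntegrable (by fun_prop) _ _) fun t ht => ?_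
  exact mul_le_of_le_one_right (pow_nonneg ht.1 _) (exp_le_one_iff.2 (by nlinarith))

lemma sub_le_gaussMoment (n : ℕ) {x : ℝ} (hx : 0 ≤ x) :
    x ^ (2 * n + 1) / (2 * n + 1) - x ^ (2 * n + 3) / (2 * n + 3) ≤ gaussMoment n x := by
  have hpow : ∫ t in (0:ℝ)..x, t ^ (2 * n) * (1 - t ^ 2)
      = x ^ (2 * n + 1) / (2 * n + 1) - x ^ (2 * n + 3) / (2 * n + 3) := by
    simp only [mul_sub, mul_one, ← pow_add]
    rw [integral_sub (Continuous.intervalIntegrable (by fun_prop) _ _)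
      (Continuous.intervalIntegrable (by fun_prop) _ _), integral_pow, integral_pow]
    push_cast
    ring
  rw [← hpow]
  refine integral_mono_on hx (Continuous.intervalIntegrable (by fun_prop) _ _)
    (Continuous.intervalIntegrable (by fun_prop) _ _) fun t ht => ?_
  exact mul_le_mul_of_nonneg_left (by linarith [add_one_le_exp (-t ^ 2)]) (pow_nonneg ht.1 _)

lemma tendsto_gaussMoment_div_pow (n : ℕ) :
    Tendsto (fun x => gaussMoment n x / x ^ (2 * n + 1)) (𝓝[>] 0) (𝓝 (1 / (2 * (n : ℝ) + 1))) := by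
  have hlower : Tendsto (fun x : ℝ => 1 / (2 * n + 1) - x ^ 2 / (2 * n + 3)) (𝓝[>] 0)
      (𝓝 (1 / (2 * (n : ℝ) + 1))) := by
    have hcont : Continuous fun x : ℝ => 1 / (2 * n + 1) - x ^ 2 / (2 * n + 3) := by fun_prop
    simpa using (hcont.tendsto 0).mono_left nhdsWithin_le_nhds
  refine tendsto_of_tendsto_of_tendsto_of_le_of_le' hlower tendsto_const_nhds ?_ ?_ <;>
    filter_upwards [self_mem_nhdsWithin] with x (hx : 0 < x)
  · rw [le_div_iff₀ (by positivity)]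
    refine Eq.trans_le ?_ (sub_le_gaussMoment n hx.le)
    field_simp
    ring
  · rw [div_le_iff₀ (by positivity)]
    refine (gaussMoment_le n hx.le).trans_eq ?_
    field_simp

theorem B_tendsto_at_zero (α : ℝ) (hα : 0 < α) (n : ℕ) :
    Filter.Tendsto (B α n) (nhdsWithin 0 (Set.Ioi 0))
      (nhds (-(α ^ ((n : ℝ) + 1 / 2) / Real.sqrt Real.pi) * (2 ^ (n + 1) / (2 * n + 1)))) := by
  have hs : 0 < √α := sqrt_pos.2 hα
  have hscale : Tendsto (fun r => √α * r) (𝓝[>] 0) (𝓝[>] 0) :=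
    tendsto_nhdsWithin_of_tendsto_nhds_of_eventually_within _
      (by simpa using ((continuous_const_mul √α).tendsto 0).mono_left nhdsWithin_le_nhds)
      (by filter_upwards [self_mem_nhdsWithin] with r (hr : 0 < r) using mul_pos hs hr)
  have hlim := ((tendsto_gaussMoment_div_pow n).comp hscale).const_mul
    (-(2 ^ (n + 1) / √π) * √α ^ (2 * n + 1))
  have hrpow : α ^ ((n : ℝ) + 1 / 2) = √α ^ (2 * n + 1) := by
    rw [rpow_add hα, rpow_natCast, ← sqrt_eq_rpow, pow_succ, pow_mul, sq_sqrt hα.le]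
  rw [hrpow]
  convert hlim.congr' ?_ using 2
  · field_simp
  filter_upwards [self_mem_nhdsWithin] with r (hr : 0 < r)
  rw [B_eq_gaussMoment hα.le n hr.ne', Function.comp_apply, mul_pow]
  field_simp
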